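/- Let R_1, R_2 > 0 and τ_1, τ_2 > 0 with R_1/τ_1 < R_2/τ_2. Then for all interference values A ≥ 0, the well-behaved baseline allocations a_1 = (2^{R_1}-1)/(2^{R_1/τ_1}-1) + (2^{R_1}-1)(a_2 + A) and a_2 = (2^{R_2}-1)/(2^{R_2/τ_2}-1) + (2^{R_2}-1)A satisfy a_1 > a_2 · 2^{R_2}(2^{R_1}-1)/(2^{R_2}-1). -/
import Mathlib


theorem stmt_12 (R₁ R₂ τ₁ τ₂ A : ℝ)
    (hR₁ : 0 < R₁) (hR₂ : 0 < R₂) (hτ₁ : 0 < τ₁) (hτ₂ : 0 < τ₂)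
    (hord : R₁ / τ₁ < R₂ / τ₂) (hA : 0 ≤ A)
    (a₁ a₂ : ℝ)
    (ha₂ : a₂ = ((2 : ℝ) ^ R₂ - 1) / ((2 : ℝ) ^ (R₂ / τ₂) - 1) + ((2 : ℝ) ^ R₂ - 1) * A)
    (ha₁ : a₁ = ((2 : ℝ) ^ R₁ - 1) / ((2 : ℝ) ^ (R₁ / τ₁) - 1) +
      ((2 : ℝ) ^ R₁ - 1) * (a₂ + A)) :
    a₁ > a₂ * (2 : ℝ) ^ R₂ * ((2 : ℝ) ^ R₁ - 1) / ((2 : ℝ) ^ R₂ - 1) := by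
  have h2 : (1 : ℝ) < 2 := one_lt_two
  have he1 : (1 : ℝ) < (2 : ℝ) ^ R₁ := Real.one_lt_rpow_iff_of_pos (by norm_num) |>.2 (Or.inl ⟨h2, hR₁⟩)
  have he2 : (1 : ℝ) < (2 : ℝ) ^ R₂ := Real.one_lt_rpow_iff_of_pos (by norm_num) |>.2 (Or.inl ⟨h2, hR₂⟩)
  have hd1 : (1 : ℝ) < (2 : ℝ) ^ (R₁ / τ₁) :=
    Real.one_lt_rpow_iff_of_pos (by norm_num) |>.2 (Or.inl ⟨h2, div_pos hR₁ hτ₁⟩)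
  have hd2 : (1 : ℝ) < (2 : ℝ) ^ (R₂ / τ₂) :=
    Real.one_lt_rpow_iff_of_pos (by norm_num) |>.2 (Or.inl ⟨h2, div_pos hR₂ hτ₂⟩)
  have hdd : (2 : ℝ) ^ (R₁ / τ₁) < (2 : ℝ) ^ (R₂ / τ₂) :=
    (Real.rpow_lt_rpow_left_iff h2).2 hord
  set e₁ := (2 : ℝ) ^ R₁ - 1 with he₁
  set e₂ := (2 : ℝ) ^ R₂ - 1 with he₂
  set d₁ := (2 : ℝ) ^ (R₁ / τ₁) - 1 with hd₁
  set d₂ := (2 : ℝ) ^ (R₂ / τ₂) - 1 with hd₂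
  have he1p : 0 < e₁ := by simp [he₁]; linarith
  have he2p : 0 < e₂ := by simp [he₂]; linarith
  have hd1p : 0 < d₁ := by simp [hd₁]; linarith
  have hd2p : 0 < d₂ := by simp [hd₂]; linarith
  have hdlt : d₁ < d₂ := by simp [hd₁, hd₂]; linarith
  have hinv : 1 / d₂ < 1 / d₁ := one_div_lt_one_div_of_lt hd1p hdlt
  have h2R2 : (2 : ℝ) ^ R₂ = e₂ + 1 := by simp [he₂]
  rw [gt_iff_lt, div_lt_iff₀ he2p, ha₁, ha₂, h2R2]
  have hkey : e₂ / d₂ = e₂ * (1 / d₂) := by ring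
  have hkey1 : e₁ / d₁ = e₁ * (1 / d₁) := by ring
  rw [hkey, hkey1]
  nlinarith [mul_pos he1p he2p, mul_pos he2p hd2p, mul_lt_mul_of_pos_left hinv (mul_pos he1p he2p)]
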